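/- Let F be a pricing function with marginal-rate function G and let f>0 be the unit trading fee. Fix β>0. Then φ^A(α,β) → 0 and φ^B(α,β) → 0 as α decreases to G(β)(1+f) (through values α > G(β)(1+f)); and, for fixed α>0, φ^A(α,β) → 0 and φ^B(α,β) → 0 as β decreases to G⁻¹(α/(1+f)) (through values β > G⁻¹(α/(1+f))). In particular, extending φ^A and φ^B by the value 0 on the region {(α,β) : 1/(1+f) ≤ G(β)/α ≤ 1+f} yields functions continuous up to that part of the boundary of the region {G(β)/α < 1/(1+f)}. -/

import Mathlib

/-!
Writing `a = 1 - φᴬ ∈ (0,1)`, `b = 1 - φᴮ > 1` and `r = G⁻¹(α/(1+f))/β`, the defining ratio says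
`a = r b`, hence `r < a < 1` and `1 < b < 1/r`. Both boundary limits are limits along which
`r → 1`, because `G⁻¹(u) → β` as `u ↓ G β` (`G` is continuous and strictly decreasing), so
`φᴬ` and `φᴮ` are squeezed to `0`.
-/

open Set Filter Topology

/-- A pricing function `F` with partial derivatives `Fx`, `Fy` and marginal-rate
function `G` (with derivative `G'`), as in Assumption 1 (Pricing Formula):
(i) `F` is continuously differentiable with positive partial derivatives;
(ii) `Fx/Fy = G(x/y)` where `G` is continuously differentiable, strictly
decreasing (negative derivative), with `G → ∞` at `0⁺` and `G → 0` at `∞`;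
(iii) homogeneity of level sets. -/
structure PricingFunction (F Fx Fy : ℝ → ℝ → ℝ) (G G' : ℝ → ℝ) : Prop where
  partialX : ∀ x y : ℝ, 0 < x → 0 < y → HasDerivAt (fun t => F t y) (Fx x y) x
  partialY : ∀ x y : ℝ, 0 < x → 0 < y → HasDerivAt (fun t => F x t) (Fy x y) y
  contX : ContinuousOn (fun p : ℝ × ℝ => Fx p.1 p.2) (Ioi 0 ×ˢ Ioi 0)
  contY : ContinuousOn (fun p : ℝ × ℝ => Fy p.1 p.2) (Ioi 0 ×ˢ Ioi 0)
  posX : ∀ x y : ℝ, 0 < x → 0 < y → 0 < Fx x y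
  posY : ∀ x y : ℝ, 0 < x → 0 < y → 0 < Fy x y
  ratio : ∀ x y : ℝ, 0 < x → 0 < y → Fx x y / Fy x y = G (x / y)
  derivG : ∀ z : ℝ, 0 < z → HasDerivAt G (G' z) z
  contG' : ContinuousOn G' (Ioi 0)
  negG' : ∀ z : ℝ, 0 < z → G' z < 0
  tendstoG0 : Tendsto G (𝓝[>] (0:ℝ)) atTop
  tendstoGtop : Tendsto G atTop (𝓝 0)
  homog : ∀ x y x' y' c : ℝ, 0 < x → 0 < y → 0 < x' → 0 < y' → 0 < c →
    F x y = F x' y' → F (c * x) (c * y) = F (c * x') (c * y')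

namespace PricingFunction

variable {F Fx Fy : ℝ → ℝ → ℝ} {G G' : ℝ → ℝ}

theorem strictAntiOn_G (hF : PricingFunction F Fx Fy G G') : StrictAntiOn G (Ioi 0) := by
  refine strictAntiOn_of_deriv_neg (convex_Ioi 0)
    (fun z hz => (hF.derivG z hz).continuousAt.continuousWithinAt) fun z hz => ?_
  rw [interior_Ioi] at hz
  rw [(hF.derivG z hz).deriv]
  exact hF.negG' z hz

theorem G_pos (hF : PricingFunction F Fx Fy G G') {z : ℝ} (hz : 0 < z) : 0 < G z := by
  have hG := hF.strictAntiOn_G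
  have h_nonneg : 0 ≤ G (z + 1) := by
    refine le_of_tendsto hF.tendstoGtop ?_
    filter_upwards [eventually_gt_atTop (z + 1)] with w hw
    exact (hG (mem_Ioi.2 (by linarith)) (mem_Ioi.2 (by linarith)) hw).le
  have h_lt : G (z + 1) < G z := hG (mem_Ioi.2 hz) (mem_Ioi.2 (by linarith)) (by linarith)
  linarith

end PricingFunction

theorem StrictAntiOn.tendsto_rightInverse_nhdsGT {G Ginv : ℝ → ℝ} (hG : StrictAntiOn G (Ioi 0))
    (hGinv : ∀ u : ℝ, 0 < u → 0 < Ginv u ∧ G (Ginv u) = u) {β : ℝ} (hβ : 0 < β)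
    (hGβ : 0 < G β) : Tendsto Ginv (𝓝[>] (G β)) (𝓝 β) := by
  have h_pos : ∀ᶠ u in 𝓝[>] (G β), G β < u ∧ 0 < Ginv u ∧ G (Ginv u) = u := by
    filter_upwards [self_mem_nhdsWithin] with u hu
    exact ⟨hu, hGinv u (hGβ.trans hu)⟩
  refine tendsto_order.2 ⟨fun c hc => ?_, fun c hc => ?_⟩
  · obtain ⟨c', hcc', hc'β⟩ := exists_between (max_lt hc hβ)
    have hc' : 0 < c' := (le_max_right c 0).trans_lt hcc'
    have hGc' : G β < G c' := hG (mem_Ioi.2 hc') (mem_Ioi.2 hβ) hc'β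
    filter_upwards [h_pos, nhdsWithin_le_nhds (Iio_mem_nhds hGc')] with u ⟨_, hu, hGu⟩ hu'
    have : c' < Ginv u := (hG.lt_iff_gt (mem_Ioi.2 hu) (mem_Ioi.2 hc')).1 (by rwa [hGu])
    exact (le_max_left c 0).trans_lt (hcc'.trans this)
  · filter_upwards [h_pos] with u ⟨hu, hGinvu, hGu⟩
    have : Ginv u < β := (hG.lt_iff_gt (mem_Ioi.2 hβ) (mem_Ioi.2 hGinvu)).1 (by rwa [hGu])
    exact this.trans hc

theorem tendsto_div_const_nhdsGT_mul (x : ℝ) {c : ℝ} (hc : 0 < c) :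
    Tendsto (· / c) (𝓝[>] (x * c)) (𝓝[>] x) := by
  refine tendsto_nhdsWithin_of_tendsto_nhds_of_eventually_within _ ?_ ?_
  · simpa [hc.ne'] using ((tendsto_id (x := 𝓝 (x * c))).div_const c).mono_left nhdsWithin_le_nhds
  · filter_upwards [self_mem_nhdsWithin] with a ha using (lt_div_iff₀ hc).2 ha

theorem lt_one_sub_and_one_sub_inv_lt_of_div_eq {pA pB r : ℝ} (hA : pA ∈ Ioo (0 : ℝ) 1)
    (hB : pB < 0) (hr : (1 - pA) / (1 - pB) = r) : pA < 1 - r ∧ 1 - r⁻¹ < pB := by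
  have ha : 0 < 1 - pA := by linarith [hA.2]
  have hb : 1 < 1 - pB := by linarith
  have hab : 1 - pA = r * (1 - pB) := by rw [← hr]; field_simp
  have hr0 : 0 < r := by rw [← hr]; positivity
  constructor
  · nlinarith
  · have : 1 - pB < r⁻¹ := by rw [← one_div, lt_div_iff₀ hr0]; nlinarith [hA.1]
    linarith

theorem tendsto_zero_of_div_tendsto_one {ι : Type*} {l : Filter ι} {pA pB r : ι → ℝ}
    (hr : Tendsto r l (𝓝 1))
    (h : ∀ᶠ i in l, pA i ∈ Ioo (0 : ℝ) 1 ∧ pB i < 0 ∧ (1 - pA i) / (1 - pB i) = r i) :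
    Tendsto pA l (𝓝 0) ∧ Tendsto pB l (𝓝 0) := by
  have h_upper : Tendsto (fun i => 1 - r i) l (𝓝 0) := by
    simpa using hr.const_sub 1
  have h_lower : Tendsto (fun i => 1 - (r i)⁻¹) l (𝓝 0) := by
    simpa using (hr.inv₀ one_ne_zero).const_sub 1
  constructor
  · refine tendsto_of_tendsto_of_tendsto_of_le_of_le' tendsto_const_nhds h_upper ?_ ?_ <;>
      filter_upwards [h] with i ⟨hA, hB, hdiv⟩
    · exact hA.1.le
    · exact (lt_one_sub_and_one_sub_inv_lt_of_div_eq hA hB hdiv).1.le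
  · refine tendsto_of_tendsto_of_tendsto_of_le_of_le' h_lower tendsto_const_nhds ?_ ?_ <;>
      filter_upwards [h] with i ⟨hA, hB, hdiv⟩
    · exact (lt_one_sub_and_one_sub_inv_lt_of_div_eq hA hB hdiv).2.le
    · exact hB.le

/-- Boundary limits of the optimal trading proportions: for fixed `β > 0`,
`φᴬ(α,β) → 0` and `φᴮ(α,β) → 0` as `α ↓ G(β)(1+f)`; and for fixed `α > 0`,
`φᴬ(α,β) → 0` and `φᴮ(α,β) → 0` as `β ↓ G⁻¹(α/(1+f))`. -/
theorem stmt4 (F Fx Fy : ℝ → ℝ → ℝ) (G G' Ginv : ℝ → ℝ)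
    (hF : PricingFunction F Fx Fy G G')
    (hGinv : ∀ u : ℝ, 0 < u → 0 < Ginv u ∧ G (Ginv u) = u)
    (f : ℝ) (hf : 0 < f)
    (φA φB : ℝ → ℝ → ℝ)
    (hφ : ∀ α β : ℝ, 0 < α → 0 < β → G β / α < 1 / (1 + f) →
      φA α β ∈ Ioo (0:ℝ) 1 ∧ φB α β < 0 ∧
      (1 - φA α β) / (1 - φB α β) = (1 / β) * Ginv (α / (1 + f)) ∧
      F (β * (1 - φA α β)) (1 - φB α β) = F β 1)
    (β : ℝ) (hβ : 0 < β) (α : ℝ) (hα : 0 < α) :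
    Tendsto (fun a => φA a β) (𝓝[>] (G β * (1 + f))) (𝓝 0) ∧
    Tendsto (fun a => φB a β) (𝓝[>] (G β * (1 + f))) (𝓝 0) ∧
    Tendsto (fun b => φA α b) (𝓝[>] (Ginv (α / (1 + f)))) (𝓝 0) ∧
    Tendsto (fun b => φB α b) (𝓝[>] (Ginv (α / (1 + f)))) (𝓝 0) := by
  have hf1 : (0 : ℝ) < 1 + f := by linarith
  have hG := hF.strictAntiOn_G
  have hGβ := hF.G_pos hβ
  have h_ratio_α : Tendsto (fun a => 1 / β * Ginv (a / (1 + f))) (𝓝[>] (G β * (1 + f))) (𝓝 1) := by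
    simpa [hβ.ne'] using
      ((hG.tendsto_rightInverse_nhdsGT hGinv hβ hGβ).comp
        (tendsto_div_const_nhdsGT_mul (G β) hf1)).const_mul (1 / β)
  obtain ⟨hβ₀, hGβ₀⟩ := hGinv (α / (1 + f)) (by positivity)
  have h_ratio_β : Tendsto (fun b => 1 / b * Ginv (α / (1 + f)))
      (𝓝[>] (Ginv (α / (1 + f)))) (𝓝 1) := by
    refine tendsto_nhdsWithin_of_tendsto_nhds ?_
    simpa [hβ₀.ne'] using (tendsto_id.inv₀ hβ₀.ne').mul_const (Ginv (α / (1 + f)))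
  obtain ⟨hA_α, hB_α⟩ := tendsto_zero_of_div_tendsto_one
    (pA := fun a => φA a β) (pB := fun a => φB a β) h_ratio_α <| by
    filter_upwards [self_mem_nhdsWithin] with a (ha : G β * (1 + f) < a)
    have ha0 : 0 < a := (mul_pos hGβ hf1).trans ha
    obtain ⟨hA, hB, hdiv, -⟩ := hφ a β ha0 hβ ((div_lt_div_iff₀ ha0 hf1).2 (by linarith))
    exact ⟨hA, hB, hdiv⟩
  obtain ⟨hA_β, hB_β⟩ := tendsto_zero_of_div_tendsto_one
    (pA := φA α) (pB := φB α) h_ratio_β <| by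
    filter_upwards [self_mem_nhdsWithin] with b (hb : Ginv (α / (1 + f)) < b)
    have hb0 : 0 < b := hβ₀.trans hb
    have hGb : G b < α / (1 + f) := hGβ₀ ▸ hG (mem_Ioi.2 hβ₀) (mem_Ioi.2 hb0) hb
    obtain ⟨hA, hB, hdiv, -⟩ :=
      hφ α b hα hb0 (by rwa [div_lt_div_iff₀ hα hf1, one_mul, ← lt_div_iff₀ hf1])
    exact ⟨hA, hB, hdiv⟩
  exact ⟨hA_α, hB_α, hA_β, hB_β⟩
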